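/- For every a < 0 and every t > 0, one has ∫₀^t erf( a/√τ ) dτ = (2a² + t)·erf( a/√t ) + 2a·√(t/π)·exp(−a²/t) + 2a². -/

import Mathlib

open Real MeasureTheory Filter Set Topology

/-!
The function `F τ = (2a² + τ) erf (a/√τ) + (2a/√π) √τ exp (-a²/τ)` has derivative
`erf (a/√τ)` on `(0, ∞)`. For `a < 0` we have `a/√τ → -∞` as `τ → 0⁺`, so `erf (a/√τ) → -1`
and `F τ → -2a²`. Since `|erf| ≤ 1`, the integrand is integrable near `0`, and the fundamental
theorem of calculus with a one-sided limit at the left endpoint gives `F t + 2a²`.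
-/

/-- The error function `erf a = (2/√π) ∫₀^a exp(−b²) db`. -/
noncomputable def erf (a : ℝ) : ℝ := (2 / Real.sqrt π) * ∫ b in (0:ℝ)..a, Real.exp (-b^2)

lemma continuous_exp_neg_sq : Continuous fun b : ℝ => exp (-b ^ 2) := by
  fun_prop

lemma hasDerivAt_erf (x : ℝ) : HasDerivAt erf (2 / √π * exp (-x ^ 2)) x :=
  (intervalIntegral.integral_hasDerivAt_right (continuous_exp_neg_sq.intervalIntegrable _ _)
    (continuous_exp_neg_sq.stronglyMeasurableAtFilter _ _)
    continuous_exp_neg_sq.continuousAt).const_mul _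

lemma continuous_erf : Continuous erf :=
  continuous_iff_continuousAt.2 fun x => (hasDerivAt_erf x).continuousAt

lemma erf_neg (x : ℝ) : erf (-x) = -erf x := by
  simp only [erf]
  rw [← neg_zero, ← intervalIntegral.integral_comp_neg, neg_zero]
  simp only [even_two, Even.neg_pow]
  rw [intervalIntegral.integral_symm]
  ring

lemma monotone_erf : Monotone erf :=
  monotone_of_hasDerivAt_nonneg hasDerivAt_erf fun _ => by positivity

lemma tendsto_erf_atTop : Tendsto erf atTop (𝓝 1) := by
  have hgauss : Tendsto (fun y => ∫ b in (0:ℝ)..y, exp (-b ^ 2)) atTop (𝓝 (√π / 2)) := by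
    have h := integral_gaussian_Ioi 1
    simp only [neg_mul, one_mul, div_one] at h
    rw [← h]
    exact intervalIntegral_tendsto_integral_Ioi 0
      (by simpa using (integrable_exp_neg_mul_sq one_pos).integrableOn) tendsto_id
  have hπ : √π ≠ 0 := (sqrt_pos.2 pi_pos).ne'
  have h := hgauss.const_mul (2 / √π)
  rwa [show 2 / √π * (√π / 2) = 1 by field_simp] at h

lemma tendsto_erf_atBot : Tendsto erf atBot (𝓝 (-1)) := by
  have h := tendsto_erf_atTop.comp tendsto_neg_atBot_atTop
  simpa [Function.comp_def, erf_neg] using h.neg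

lemma abs_erf_le_one (x : ℝ) : |erf x| ≤ 1 :=
  abs_le.2 ⟨monotone_erf.le_of_tendsto tendsto_erf_atBot x,
    monotone_erf.ge_of_tendsto tendsto_erf_atTop x⟩

lemma hasDerivAt_erf_div_sqrt (a : ℝ) {τ : ℝ} (hτ : 0 < τ) :
    HasDerivAt (fun τ => erf (a / √τ))
      (-(a / (√π * τ * √τ)) * exp (-a ^ 2 / τ)) τ := by
  have hs : √τ ≠ 0 := (sqrt_pos.2 hτ).ne'
  refine ((hasDerivAt_erf _).comp τ
    ((hasDerivAt_const τ a).div (hasDerivAt_sqrt hτ.ne') hs)).congr_deriv ?_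
  rw [Pi.div_apply, div_pow, sq_sqrt hτ.le]
  field_simp
  rw [sq_sqrt hτ.le]
  ring

lemma hasDerivAt_sqrt_mul_exp_neg_div (a : ℝ) {τ : ℝ} (hτ : 0 < τ) :
    HasDerivAt (fun τ => √τ * exp (-a ^ 2 / τ))
      ((1 / (2 * √τ) + a ^ 2 / (τ * √τ)) * exp (-a ^ 2 / τ)) τ := by
  refine ((hasDerivAt_sqrt hτ.ne').mul
    ((hasDerivAt_const τ (-a ^ 2)).div (hasDerivAt_id' τ) hτ.ne').exp).congr_deriv ?_
  rw [Pi.div_apply]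
  field_simp
  rw [sq_sqrt hτ.le]
  ring

noncomputable def erfDivSqrtPrimitive (a τ : ℝ) : ℝ :=
  (2 * a ^ 2 + τ) * erf (a / √τ) + 2 * a / √π * (√τ * exp (-a ^ 2 / τ))

lemma hasDerivAt_erfDivSqrtPrimitive (a : ℝ) {τ : ℝ} (hτ : 0 < τ) :
    HasDerivAt (erfDivSqrtPrimitive a) (erf (a / √τ)) τ := by
  refine ((((hasDerivAt_id' τ).const_add (2 * a ^ 2)).mul (hasDerivAt_erf_div_sqrt a hτ)).add
    ((hasDerivAt_sqrt_mul_exp_neg_div a hτ).const_mul (2 * a / √π))).congr_deriv ?_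
  field_simp
  ring

lemma intervalIntegrable_erf_div_sqrt (a t₁ t₂ : ℝ) :
    IntervalIntegrable (fun τ => erf (a / √τ)) volume t₁ t₂ :=
  intervalIntegrable_const.mono_fun'
    (continuous_erf.measurable.comp
      (measurable_const.div continuous_sqrt.measurable)).aestronglyMeasurable
    (ae_of_all _ fun _ => (Real.norm_eq_abs _).trans_le (abs_erf_le_one _))

lemma tendsto_erfDivSqrtPrimitive_nhdsGT_zero {a : ℝ} (ha : a < 0) :
    Tendsto (erfDivSqrtPrimitive a) (𝓝[>] 0) (𝓝 (-(2 * a ^ 2))) := by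
  have hsqrt : Tendsto (fun τ => √τ) (𝓝[>] 0) (𝓝[>] 0) :=
    tendsto_nhdsWithin_of_tendsto_nhds_of_eventually_within _
      (by simpa using continuous_sqrt.continuousWithinAt.tendsto (x := 0) (s := Ioi 0))
      (eventually_nhdsWithin_of_forall fun τ hτ => sqrt_pos.2 hτ)
  have herf : Tendsto (fun τ => erf (a / √τ)) (𝓝[>] 0) (𝓝 (-1)) := by
    refine tendsto_erf_atBot.comp ?_
    simpa [div_eq_mul_inv] using (tendsto_inv_nhdsGT_zero.comp hsqrt).const_mul_atTop_of_neg ha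
  have hexp : Tendsto (fun τ => exp (-a ^ 2 / τ)) (𝓝[>] 0) (𝓝 0) := by
    have ha2 : -a ^ 2 < 0 := neg_neg_of_pos (sq_pos_of_neg ha)
    exact tendsto_exp_atBot.comp <| (tendsto_inv_nhdsGT_zero.const_mul_atTop_of_neg ha2).congr
      fun τ => (div_eq_mul_inv _ _).symm
  have hlin : Tendsto (fun τ : ℝ => 2 * a ^ 2 + τ) (𝓝[>] 0) (𝓝 (2 * a ^ 2)) :=
    ((continuous_const_add _).tendsto' 0 _ (add_zero _)).mono_left nhdsWithin_le_nhds
  have h := (hlin.mul herf).add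
    (((hsqrt.mono_right nhdsWithin_le_nhds).mul hexp).const_mul (2 * a / √π))
  rwa [show 2 * a ^ 2 * -1 + 2 * a / √π * (0 * 0) = -(2 * a ^ 2) by ring] at h

/-- `∫₀^t erf(a/√τ) dτ = (2a² + t) erf(a/√t) + 2a √(t/π) exp(−a²/t) + 2a²`
for `a < 0`, `t > 0`. -/
theorem integral_erf_neg (a t : ℝ) (ha : a < 0) (ht : 0 < t) :
    ∫ τ in (0:ℝ)..t, erf (a / Real.sqrt τ)
    = (2*a^2 + t) * erf (a / Real.sqrt t)
      + 2*a * Real.sqrt (t/π) * Real.exp (-(a^2)/t) + 2*a^2 := by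
  rw [intervalIntegral.integral_eq_sub_of_hasDerivAt_of_tendsto ht
    (fun τ hτ => hasDerivAt_erfDivSqrtPrimitive a hτ.1) (intervalIntegrable_erf_div_sqrt a 0 t)
    (tendsto_erfDivSqrtPrimitive_nhdsGT_zero ha)
    (hasDerivAt_erfDivSqrtPrimitive a ht).continuousAt.continuousWithinAt,
    erfDivSqrtPrimitive, sqrt_div ht.le, neg_div]
  ring
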